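/- Every legal multiset O of set/clear operations on a finite family of Boolean bits with initial state v admits a complete valid execution: there is an ordering of all operations of O into a sequence such that each operation, applied in order, actually flips its designated bit (each set is applied to a currently-false bit and each clear to a currently-true bit). In particular, a fully concurrent execution of a legal multiset, in which each blocked operation retries, never deadlocks. -/

import Mathlib

/-!
A legal multiset always contains an operation flipping some bit `k` to `!v k`: legality says
that on every bit the flips away from the current value outnumber the flips back by zero or
one, so any operation on `k` forces one of the former. Performing that operation swaps the
roles of the two counts on `k`, which keeps the multiset of remaining operations legal for the
new state, and induction on the number of operations finishes the proof.
-/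

/-- A multiset `O` of set/clear operations (an operation `(k, b)` sets bit `k` to
`b`; `b = true` is a set, `b = false` is a clear) on a family of bits with state
`v` is legal if for every bit `k` the set-surplus
`S(k) = (#set ops on k) − (#clear ops on k)`, as an integer, lies in `{-1, 0, 1}`
and `v k + S(k) ∈ {0, 1}` (identifying `false` with 0 and `true` with 1). -/
def Legal {ι : Type*} [DecidableEq ι] (O : Multiset (ι × Bool)) (v : ι → Bool) : Prop :=
  ∀ k : ι,
    ((O.count (k, true) : ℤ) - (O.count (k, false) : ℤ) ∈ ({-1, 0, 1} : Set ℤ)) ∧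
    (((v k).toNat : ℤ) + ((O.count (k, true) : ℤ) - (O.count (k, false) : ℤ))
        ∈ ({0, 1} : Set ℤ))

/-- `ValidFlipSeq v ops` means that the sequence of operations `ops`, applied in
order to the family of bits with initial state `v`, actually flips each designated
bit (each set is applied to a currently-false bit, each clear to a currently-true
bit). -/
def ValidFlipSeq {ι : Type*} [DecidableEq ι] : (ι → Bool) → List (ι × Bool) → Prop
  | _, [] => True
  | v, op :: rest => v op.1 = !op.2 ∧ ValidFlipSeq (Function.update v op.1 op.2) rest

namespace Legal

variable {ι : Type*} [DecidableEq ι] {O : Multiset (ι × Bool)} {v : ι → Bool}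

theorem iff_count_le :
    Legal O v ↔ ∀ k, O.count (k, v k) ≤ O.count (k, !v k) ∧
      O.count (k, !v k) ≤ O.count (k, v k) + 1 := by
  refine forall_congr' fun k => ?_
  simp only [Set.mem_insert_iff, Set.mem_singleton_iff]
  cases v k <;> simp only [Bool.not_false, Bool.not_true, Bool.toNat_false, Bool.toNat_true] <;>
    omega

theorem flip_mem_of_mem (hO : Legal O v) {k : ι} {b : Bool} (hkb : (k, b) ∈ O) :
    (k, !v k) ∈ O := by
  obtain rfl | rfl := Bool.eq_or_eq_not b (v k)
  · rw [← Multiset.one_le_count_iff_mem] at hkb ⊢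
    exact hkb.trans (iff_count_le.mp hO k).1
  · exact hkb

theorem erase_flip (hO : Legal O v) (k : ι) :
    Legal (O.erase (k, !v k)) (Function.update v k (!v k)) := by
  rw [iff_count_le] at hO ⊢
  intro j
  rcases eq_or_ne j k with rfl | hjk
  · have hne : (j, v j) ≠ (j, !v j) := by simp
    simp only [Function.update_self, Bool.not_not, Multiset.count_erase_self,
      Multiset.count_erase_of_ne hne]
    have hj := hO j
    omega
  · have hne (b : Bool) : (j, b) ≠ (k, !v k) := by simp [hjk]
    simpa only [Function.update_of_ne hjk, Multiset.count_erase_of_ne (hne _)] using hO j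

theorem exists_validFlipSeq (hO : Legal O v) :
    ∃ l : List (ι × Bool), (l : Multiset (ι × Bool)) = O ∧ ValidFlipSeq v l := by
  induction hn : O.card generalizing O v with
  | zero => exact ⟨[], (Multiset.card_eq_zero.mp hn).symm, trivial⟩
  | succ n ih =>
    obtain ⟨⟨k, b⟩, hkb⟩ := (Multiset.card_pos_iff_exists_mem (s := O)).mp (by omega)
    have hflip := hO.flip_mem_of_mem hkb
    obtain ⟨l, hl, hvalid⟩ := ih (hO.erase_flip k)
      (by rw [Multiset.card_erase_of_mem hflip, hn]; rfl)
    refine ⟨(k, !v k) :: l, ?_, (Bool.not_not _).symm, hvalid⟩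
    rw [← Multiset.cons_coe, hl, Multiset.cons_erase hflip]

end Legal

theorem stmt5_general {ι : Type*} [DecidableEq ι]
    (O : Multiset (ι × Bool)) (v : ι → Bool) (hO : Legal O v) :
    ∃ l : List (ι × Bool), (l : Multiset (ι × Bool)) = O ∧ ValidFlipSeq v l :=
  hO.exists_validFlipSeq

/-- Every legal multiset `O` of set/clear operations on a finite family of Boolean
bits with initial state `v` admits a complete valid execution: there is an
ordering of all operations of `O` into a sequence such that each operation,
applied in order, actually flips its designated bit. In particular, a fully
concurrent execution of a legal multiset never deadlocks. -/
theorem stmt5 {ι : Type*} [Fintype ι] [DecidableEq ι]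
    (O : Multiset (ι × Bool)) (v : ι → Bool) (hO : Legal O v) :
    ∃ l : List (ι × Bool), (l : Multiset (ι × Bool)) = O ∧ ValidFlipSeq v l :=
  stmt5_general O v hO
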